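/- arXiv:1304.3971 — 6 statements merged into one kernel-verified Lean document; each statement's English description precedes it below -/
import Mathlib

section
/- Let p be a prime and m a nonnegative even integer. The number of invertible alternating m×m matrices over F_p (alternating meaning zero diagonal and A^t = -A) divided by the total number of alternating m×m matrices over F_p equals ∏_{i=1}^{m/2} (1 - p^{1-2i}). -/
/-!
Write an alternating matrix of size `n + 1` as a border: first row `φ`, first column `-φ` and an
alternating block `C`. For `φ = 0` the matrix is singular. The congruence by `diag(1, Q)` replaces
`(φ, C)` by `(Q φ, Q C Qᵀ)` and preserves invertibility, and `GL` acts transitively on nonzero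
vectors, so every nonzero `φ` admits as many good `C` as `φ = e₀`; for `φ = e₀` and `C` itself
a border `(w, D)`, the determinant is `det D`. Hence the number of invertible ones satisfies
`N(n + 2) = (q^(n+1) - 1) q^n N(n)` with `q = |K|`, all alternating ones satisfy
`M(n + 1) = q^n M(n)`, and the ratio `N / M` gains the factor `1 - q^(-(2k+1))` from size `2k` to `2k + 2`.
-/

/-- An alternating matrix: zero diagonal and `Aᵀ = -A`. -/
def Matrix.IsAlternating {n : Type*} [Fintype n] [DecidableEq n] {R : Type*} [Ring R]
    (A : Matrix n n R) : Prop :=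
  A.transpose = -A ∧ ∀ i, A i i = 0

namespace Matrix

variable {R : Type*} [CommRing R]

section

variable {m n : Type*} [Fintype m] [DecidableEq m] [Fintype n] [DecidableEq n] {A : Matrix n n R}

theorem IsAlternating.apply_swap (h : A.IsAlternating) (i j : n) : A j i = -A i j := by
  simpa using congrFun (congrFun h.1 i) j

theorem IsAlternating.dotProduct_mulVec_self (h : A.IsAlternating) (v : n → R) :
    v ⬝ᵥ (A *ᵥ v) = 0 := by
  simp only [dotProduct, mulVec, Finset.mul_sum, ← Finset.sum_product']
  refine Finset.sum_ninvolution Prod.swap (fun ⟨i, j⟩ => ?_) (fun ⟨i, j⟩ hne heq => ?_)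
    (fun _ => Finset.mem_univ _) Prod.swap_swap
  · simp only [Prod.swap, h.apply_swap i j]; ring
  · obtain rfl : j = i := congrArg Prod.fst heq
    simp [h.2] at hne

theorem IsAlternating.mul_mul_transpose (h : A.IsAlternating) (Q : Matrix m n R) :
    (Q * A * Qᵀ).IsAlternating := by
  refine ⟨by simp [transpose_mul, h.1, Matrix.mul_assoc], fun i => ?_⟩
  rw [Matrix.mul_assoc, mul_apply]
  simpa [mulVec, dotProduct, mul_apply] using h.dotProduct_mulVec_self (Q i)

end

section Border

variable {n : ℕ}

/-- The block matrix `[[0, φ], [-φᵀ, C]]`. -/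
def border (φ : Fin n → R) (C : Matrix (Fin n) (Fin n) R) :
    Matrix (Fin (n + 1)) (Fin (n + 1)) R :=
  of (vecCons (vecCons 0 φ) fun i => vecCons (-φ i) (C i))

variable (φ : Fin n → R) (C : Matrix (Fin n) (Fin n) R)

@[simp] theorem border_zero_zero : border φ C 0 0 = 0 := rfl
@[simp] theorem border_zero_succ (j : Fin n) : border φ C 0 j.succ = φ j := rfl
@[simp] theorem border_succ_zero (i : Fin n) : border φ C i.succ 0 = -φ i := rfl
@[simp] theorem border_succ_succ (i j : Fin n) : border φ C i.succ j.succ = C i j := rfl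

theorem isAlternating_border_iff : (border φ C).IsAlternating ↔ C.IsAlternating := by
  constructor
  · rintro ⟨ht, hd⟩
    refine ⟨?_, fun i => by simpa using hd i.succ⟩
    ext i j
    simpa using congrFun (congrFun ht i.succ) j.succ
  · intro hC
    refine ⟨?_, fun i => Fin.cases (by simp) (by simp [hC.2]) i⟩
    ext i j
    refine Fin.cases (Fin.cases (by simp) (by simp) j)
      (fun i => Fin.cases (by simp) (fun j => by simpa using hC.apply_swap i j) j) i

theorem IsAlternating.eq_border {A : Matrix (Fin (n + 1)) (Fin (n + 1)) R} (h : A.IsAlternating) :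
    A = border (fun j => A 0 j.succ) (A.submatrix Fin.succ Fin.succ) := by
  ext i j
  refine Fin.cases (Fin.cases ?_ ?_ j) (fun i => Fin.cases ?_ ?_ j) i <;>
    simp [h.2, h.apply_swap 0]

theorem det_border_zero : (border 0 C).det = 0 :=
  det_eq_zero_of_row_eq_zero 0 fun j => Fin.cases (by simp) (by simp) j

theorem det_border_single_zero_border (w : Fin n → R) (D : Matrix (Fin n) (Fin n) R) :
    (border (Pi.single 0 1) (border w D)).det = D.det := by
  have h01 : border (Pi.single 0 1) (border w D) 0 1 = 1 := rfl
  have hD : (border (Pi.single 0 1) (border w D)).submatrix (Fin.succ ∘ Fin.succ)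
      (Fin.succAbove 1 ∘ Fin.succ) = D := by
    rw [show Fin.succAbove 1 ∘ Fin.succ = Fin.succ ∘ @Fin.succ n from
      funext Fin.one_succAbove_succ]
    rfl
  -- Expand along row 0, where only column 1 survives; the minor has first column `-e₀`.
  rw [det_succ_row_zero, Fin.sum_univ_succ, Fin.sum_univ_succ]
  simp [det_succ_column_zero (n := n), Fin.sum_univ_succ, h01, hD]

def blockDiagOne (Q : Matrix (Fin n) (Fin n) R) : Matrix (Fin (n + 1)) (Fin (n + 1)) R :=
  of (vecCons (vecCons 1 0) fun i => vecCons 0 (Q i))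

theorem det_blockDiagOne (Q : Matrix (Fin n) (Fin n) R) : (blockDiagOne Q).det = Q.det := by
  have h00 : blockDiagOne Q 0 0 = 1 := rfl
  have h0succ (j : Fin n) : blockDiagOne Q 0 j.succ = 0 := rfl
  have hQ : (blockDiagOne Q).submatrix Fin.succ Fin.succ = Q := rfl
  simp [det_succ_row_zero, Fin.sum_univ_succ, h00, h0succ, hQ]

theorem blockDiagOne_mul_border_mul_transpose (Q : Matrix (Fin n) (Fin n) R) :
    blockDiagOne Q * border φ C * (blockDiagOne Q)ᵀ = border (Q *ᵥ φ) (Q * C * Qᵀ) := by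
  ext i j
  refine Fin.cases (Fin.cases ?_ ?_ j) (fun i => Fin.cases ?_ (fun j => ?_) j) i <;>
    simp [blockDiagOne, border, mul_apply, Fin.sum_univ_succ, mulVec, dotProduct, mul_comm]

theorem det_border_mulVec (Q : Matrix (Fin n) (Fin n) R) :
    (border (Q *ᵥ φ) (Q * C * Qᵀ)).det = Q.det * (border φ C).det * Q.det := by
  rw [← blockDiagOne_mul_border_mul_transpose, det_mul, det_mul, det_transpose, det_blockDiagOne]

theorem card_isAlternating_and_fin_succ [Fintype R]
    (P : Matrix (Fin (n + 1)) (Fin (n + 1)) R → Prop) :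
    Nat.card {A : Matrix (Fin (n + 1)) (Fin (n + 1)) R // A.IsAlternating ∧ P A} =
      ∑ φ : Fin n → R,
        Nat.card {C : Matrix (Fin n) (Fin n) R // C.IsAlternating ∧ P (border φ C)} := by
  rw [← Nat.card_sigma]
  refine Nat.card_congr
    { toFun := fun A => ⟨fun j => A.1 0 j.succ, A.1.submatrix Fin.succ Fin.succ, ?_⟩
      invFun := fun x => ⟨border x.1 x.2.1, (isAlternating_border_iff _ _).2 x.2.2.1, x.2.2.2⟩
      left_inv := fun A => Subtype.ext A.2.1.eq_border.symm
      right_inv := fun x => rfl }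
  obtain ⟨hA, hP⟩ := A.2
  refine ⟨(isAlternating_border_iff (fun j => A.1 0 j.succ) _).1 ?_, ?_⟩ <;>
    rwa [← hA.eq_border]

theorem card_isAlternating_and_isUnit_det_border_mulVec (Q : GL (Fin n) R) :
    Nat.card {C : Matrix (Fin n) (Fin n) R //
      C.IsAlternating ∧ IsUnit (border ((Q : Matrix (Fin n) (Fin n) R) *ᵥ φ) C).det} =
      Nat.card {C : Matrix (Fin n) (Fin n) R // C.IsAlternating ∧ IsUnit (border φ C).det} := by
  let e (Q : GL (Fin n) R) (C : Matrix (Fin n) (Fin n) R) : Matrix (Fin n) (Fin n) R :=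
    (Q : Matrix (Fin n) (Fin n) R) * C * (Q : Matrix (Fin n) (Fin n) R)ᵀ
  have e_inv (Q : GL (Fin n) R) (C) : e Q⁻¹ (e Q C) = C := by
    simp [e, Matrix.mul_assoc, ← transpose_mul]
  refine (Nat.card_congr (Equiv.subtypeEquiv
    ⟨e Q, e Q⁻¹, e_inv Q, fun C => by simpa using e_inv Q⁻¹ C⟩ fun C => ?_)).symm
  refine and_congr
    ⟨fun h => h.mul_mul_transpose _, fun h => e_inv Q C ▸ h.mul_mul_transpose _⟩ ?_
  simp [e, det_border_mulVec, IsUnit.mul_iff, isUnits_det_units]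

end Border

section Field

variable {K : Type*} [Field K]

theorem exists_GL_mulVec_eq {ι : Type*} [Fintype ι] [DecidableEq ι] {v w : ι → K}
    (hv : v ≠ 0) (hw : w ≠ 0) : ∃ Q : GL ι K, (Q : Matrix ι ι K) *ᵥ v = w := by
  let f := (LinearEquiv.toSpanNonzeroSingleton K _ v hv).symm ≪≫ₗ
    LinearEquiv.toSpanNonzeroSingleton K _ w hw
  obtain ⟨g, hg⟩ := Submodule.exists_linearEquiv_restrict_eq f
  have hdet : IsUnit (LinearMap.toMatrix' (g : (ι → K) →ₗ[K] ι → K)).det := by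
    rw [LinearMap.det_toMatrix']
    exact g.isUnit_det'
  have hgv := hg (LinearEquiv.toSpanNonzeroSingleton K _ v hv 1)
  simp only [f, LinearEquiv.trans_apply, LinearEquiv.symm_apply_apply] at hgv
  rw [LinearEquiv.toSpanNonzeroSingleton_one, LinearEquiv.toSpanNonzeroSingleton_one] at hgv
  exact ⟨nonsingInvUnit _ hdet, (LinearMap.toMatrix'_mulVec _ _).trans hgv.symm⟩

variable [Fintype K] {n : ℕ}

theorem card_isAlternating_fin_succ :
    Nat.card {A : Matrix (Fin (n + 1)) (Fin (n + 1)) K // A.IsAlternating} =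
      Fintype.card K ^ n * Nat.card {A : Matrix (Fin n) (Fin n) K // A.IsAlternating} := by
  simpa using card_isAlternating_and_fin_succ (R := K) fun _ => True

theorem card_isAlternating_and_isUnit_det_border_of_ne_zero {φ : Fin (n + 1) → K}
    (hφ : φ ≠ 0) :
    Nat.card {C : Matrix (Fin (n + 1)) (Fin (n + 1)) K //
      C.IsAlternating ∧ IsUnit (border φ C).det} =
      Fintype.card K ^ n *
        Nat.card {D : Matrix (Fin n) (Fin n) K // D.IsAlternating ∧ IsUnit D.det} := by
  obtain ⟨Q, rfl⟩ :=
    exists_GL_mulVec_eq (v := Pi.single 0 1) (Pi.single_ne_zero_iff.2 one_ne_zero) hφ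
  rw [card_isAlternating_and_isUnit_det_border_mulVec, card_isAlternating_and_fin_succ]
  simp [det_border_single_zero_border]

theorem card_isAlternating_and_isUnit_det_fin_add_two :
    Nat.card {A : Matrix (Fin (n + 2)) (Fin (n + 2)) K // A.IsAlternating ∧ IsUnit A.det} =
      (Fintype.card K ^ (n + 1) - 1) * (Fintype.card K ^ n *
        Nat.card {D : Matrix (Fin n) (Fin n) K // D.IsAlternating ∧ IsUnit D.det}) := by
  classical
  rw [card_isAlternating_and_fin_succ, ← Finset.sum_erase_add _ _ (Finset.mem_univ 0)]
  simp only [det_border_zero, isUnit_zero_iff, zero_ne_one, and_false, Nat.card_of_isEmpty,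
    add_zero]
  rw [Finset.sum_congr rfl fun φ hφ =>
    card_isAlternating_and_isUnit_det_border_of_ne_zero (Finset.ne_of_mem_erase hφ)]
  simp [Finset.card_erase_of_mem]

theorem card_isAlternating_and_isUnit_det_div_card_isAlternating (k : ℕ) :
    (Nat.card {A : Matrix (Fin (2 * k)) (Fin (2 * k)) K //
        A.IsAlternating ∧ IsUnit A.det} : ℝ) /
      Nat.card {A : Matrix (Fin (2 * k)) (Fin (2 * k)) K // A.IsAlternating} =
    ∏ i ∈ Finset.range k, (1 - (Fintype.card K : ℝ) ^ ((1 : ℤ) - 2 * ((i : ℤ) + 1))) := by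
  induction k with
  | zero => simp [IsAlternating, Subsingleton.elim _ (0 : Matrix (Fin 0) (Fin 0) K)]
  | succ k ih =>
    rw [Finset.prod_range_succ, ← ih, show 2 * (k + 1) = 2 * k + 2 from rfl,
      card_isAlternating_and_isUnit_det_fin_add_two, card_isAlternating_fin_succ,
      card_isAlternating_fin_succ]
    have hq : (Fintype.card K : ℝ) ^ ((1 : ℤ) - 2 * ((k : ℤ) + 1)) =
        ((Fintype.card K : ℝ) ^ (2 * k + 1))⁻¹ := by
      rw [show (1 : ℤ) - 2 * ((k : ℤ) + 1) = -((2 * k + 1 : ℕ) : ℤ) by push_cast; ring,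
        _root_.zpow_neg, zpow_natCast]
    rw [hq]
    push_cast [Nat.cast_sub (Nat.one_le_pow _ _ Fintype.card_pos)]
    field_simp

end Field

end Matrix

/-- The proportion of invertible alternating `m × m` matrices over `𝔽_p`
among all alternating `m × m` matrices equals `∏_{i=1}^{m/2} (1 - p^{1-2i})`. -/
theorem stmt0 (p m : ℕ) (hp : p.Prime) (hm : Even m) :
    (Nat.card {A : Matrix (Fin m) (Fin m) (ZMod p) // A.IsAlternating ∧ IsUnit A.det} : ℝ) /
      (Nat.card {A : Matrix (Fin m) (Fin m) (ZMod p) // A.IsAlternating} : ℝ) =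
    ∏ i ∈ Finset.range (m / 2), (1 - (p : ℝ) ^ ((1 : ℤ) - 2 * ((i : ℤ) + 1))) := by
  have := Fact.mk hp
  obtain ⟨k, rfl⟩ := hm
  rw [← two_mul, Nat.mul_div_cancel_left k two_pos]
  have h := Matrix.card_isAlternating_and_isUnit_det_div_card_isAlternating (K := ZMod p) k
  rwa [ZMod.card] at h
end

section
/- For a nonnegative even integer m and prime p, the number of invertible alternating m×m matrices over F_p satisfies the recursion #GL_m(F_p)_alt = (p^{m-1} - 1) · p^{m-2} · #GL_{m-2}(F_p)_alt, with #GL_0(F_p)_alt = 1. -/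
open Matrix

abbrev AltGL (ι R : Type*) [Fintype ι] [DecidableEq ι] [CommRing R] : Type _ :=
  {A : Matrix ι ι R // A.IsAlternating ∧ IsUnit A.det}

namespace Matrix

namespace IsAlternating

variable {ι R : Type*} [Fintype ι] [DecidableEq ι] [CommRing R] {A : Matrix ι ι R}

lemma apply_swap_s1 (hA : A.IsAlternating) (i j : ι) : A j i = -A i j := by
  rw [← transpose_apply A, hA.1, neg_apply]

/-- The terms at `(i, j)` and `(j, i)` cancel; the diagonal terms vanish because `A i i = 0`, not
because of `2 ≠ 0`, so this holds in characteristic `2` as well. -/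
lemma dotProduct_mulVec_self_s1 (hA : A.IsAlternating) (x : ι → R) : x ⬝ᵥ A *ᵥ x = 0 := by
  have hsum : x ⬝ᵥ A *ᵥ x = ∑ q : ι × ι, x q.1 * A q.1 q.2 * x q.2 := by
    simp [dotProduct, mulVec, Fintype.sum_prod_type, Finset.mul_sum, mul_assoc]
  rw [hsum]
  refine Finset.sum_ninvolution Prod.swap (fun q => ?_) (fun ⟨i, j⟩ hq hswap => hq ?_)
    (fun _ => Finset.mem_univ _) Prod.swap_swap
  · rw [Prod.fst_swap, Prod.snd_swap, hA.apply_swap_s1]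
    ring
  · obtain rfl : j = i := congrArg Prod.fst hswap
    rw [hA.2, mul_zero, zero_mul]

lemma mul_mul_transpose_s1 (hA : A.IsAlternating) (P : Matrix ι ι R) :
    (P * A * Pᵀ).IsAlternating := by
  refine ⟨?_, fun i => ?_⟩
  · rw [transpose_mul, transpose_mul, transpose_transpose, hA.1, Matrix.neg_mul, Matrix.mul_neg,
      Matrix.mul_assoc]
  · have hdiag : (P * A * Pᵀ) i i = P i ⬝ᵥ A *ᵥ P i := by
      simp only [mul_apply, transpose_apply, dotProduct, mulVec, Finset.sum_mul, Finset.mul_sum]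
      rw [Finset.sum_comm]
      simp only [mul_comm, mul_left_comm]
    rw [hdiag, hA.dotProduct_mulVec_self_s1]

lemma reindex {ι' : Type*} [Fintype ι'] [DecidableEq ι'] (hA : A.IsAlternating) (e : ι ≃ ι') :
    (Matrix.reindex e e A).IsAlternating :=
  ⟨by ext i j; exact hA.apply_swap_s1 _ _, fun i => hA.2 _⟩

end IsAlternating

lemma isAlternating_reindex_iff {ι ι' R : Type*} [Fintype ι] [DecidableEq ι] [Fintype ι']
    [DecidableEq ι'] [CommRing R] (e : ι ≃ ι') {A : Matrix ι ι R} :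
    (reindex e e A).IsAlternating ↔ A.IsAlternating :=
  ⟨fun h => by simpa using h.reindex e.symm, fun h => h.reindex e⟩

section AltBorder

variable {κ μ R : Type*} [CommRing R]

def altBorder (v : κ → R) (D : Matrix κ κ R) : Matrix (Unit ⊕ κ) (Unit ⊕ κ) R :=
  fromBlocks 0 (replicateRow Unit v) (-replicateCol Unit v) D

lemma det_altBorder_one_zero : (altBorder (1 : Unit → R) (0 : Matrix Unit Unit R)).det = 1 := by
  have hfactor : altBorder (1 : Unit → R) 0 =
      fromBlocks 1 1 0 1 * fromBlocks 1 0 (-1) 1 * fromBlocks 1 1 0 1 := by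
    ext (i | i) (j | j) <;> simp [altBorder, fromBlocks_multiply]
  rw [hfactor, det_mul, det_mul, det_fromBlocks_zero₂₁, det_fromBlocks_zero₁₂]
  simp

variable [Fintype κ] [DecidableEq κ] [Fintype μ] [DecidableEq μ]

lemma IsAlternating.altBorder {D : Matrix κ κ R} (hD : D.IsAlternating) (v : κ → R) :
    (altBorder v D).IsAlternating := by
  refine ⟨?_, ?_⟩
  · rw [Matrix.altBorder, fromBlocks_transpose, hD.1, transpose_neg, transpose_replicateCol,
      transpose_replicateRow, transpose_zero, fromBlocks_neg, neg_zero, neg_neg]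
  · rintro (i | i)
    · rfl
    · exact hD.2 i

lemma IsAlternating.toBlocks₂₂ {A : Matrix (Unit ⊕ κ) (Unit ⊕ κ) R} (hA : A.IsAlternating) :
    A.toBlocks₂₂.IsAlternating :=
  ⟨by ext i j; exact hA.apply_swap_s1 _ _, fun i => hA.2 _⟩

lemma IsAlternating.eq_altBorder {A : Matrix (Unit ⊕ κ) (Unit ⊕ κ) R} (hA : A.IsAlternating) :
    A = Matrix.altBorder (A.toBlocks₁₂ ()) A.toBlocks₂₂ := by
  ext (i | i) (j | j)
  · exact hA.2 _
  · rfl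
  · exact hA.apply_swap_s1 _ _
  · rfl

lemma IsAlternating.eq_altBorder_single_altBorder
    {A : Matrix (Unit ⊕ (Unit ⊕ μ)) (Unit ⊕ (Unit ⊕ μ)) R} (hA : A.IsAlternating)
    (h : A.toBlocks₁₂ () = Pi.single (Sum.inl ()) 1) :
    A = Matrix.altBorder (Pi.single (Sum.inl ()) 1)
      (Matrix.altBorder (A.toBlocks₂₂.toBlocks₁₂ ()) A.toBlocks₂₂.toBlocks₂₂) := by
  rw [← h, ← hA.toBlocks₂₂.eq_altBorder, ← hA.eq_altBorder]

/-- Schur complement of the leading block `J = altBorder 1 0`, whose inverse is `-J`; the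
correction term vanishes because `b` meets `J` only in its second row and column, where `J` has
a zero diagonal entry. -/
lemma det_altBorder_single_altBorder (b : μ → R) (D : Matrix μ μ R) :
    (altBorder (Pi.single (Sum.inl ()) 1) (altBorder b D)).det = D.det := by
  let J : Matrix (Unit ⊕ Unit) (Unit ⊕ Unit) R := altBorder 1 0
  let _ : Invertible J := ⟨-J, by ext (i | i) (j | j) <;> simp [J, altBorder, mul_apply],
    by ext (i | i) (j | j) <;> simp [J, altBorder, mul_apply]⟩
  have hreindex : reindex (Equiv.sumAssoc Unit Unit μ).symm (Equiv.sumAssoc Unit Unit μ).symm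
      (altBorder (Pi.single (Sum.inl ()) 1) (altBorder b D)) =
      fromBlocks J (fromRows 0 (replicateRow Unit b)) (fromCols 0 (-replicateCol Unit b)) D := by
    ext ((i | i) | i) ((j | j) | j) <;> simp [J, altBorder]
  rw [← det_reindex_self (Equiv.sumAssoc Unit Unit μ).symm, hreindex, det_fromBlocks₁₁,
    det_altBorder_one_zero, one_mul, show ⅟J = -J from rfl]
  congr 1
  ext i j
  simp [J, altBorder, mul_apply]

end AltBorder

section FromBlocksOne

variable (ι : Type*) {κ R : Type*} [Fintype ι] [DecidableEq ι] [Fintype κ] [DecidableEq κ]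

def fromBlocksOneHom [Semiring R] : Matrix κ κ R →* Matrix (ι ⊕ κ) (ι ⊕ κ) R where
  toFun g := fromBlocks 1 0 0 g
  map_one' := fromBlocks_one
  map_mul' g h := by simp [fromBlocks_multiply]

variable {ι}

lemma toBlocks₁₂_fromBlocksOneHom_mul_mul_transpose [CommRing R] (g : Matrix κ κ R)
    (A : Matrix (ι ⊕ κ) (ι ⊕ κ) R) :
    (fromBlocksOneHom ι g * A * (fromBlocksOneHom ι g)ᵀ).toBlocks₁₂ = A.toBlocks₁₂ * gᵀ := by
  conv_lhs => rw [← fromBlocks_toBlocks A]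
  simp [fromBlocksOneHom, fromBlocks_transpose, fromBlocks_multiply]

end FromBlocksOne

lemma GeneralLinearGroup.exists_mulVec_eq {κ K : Type*} [Fintype κ] [DecidableEq κ] [Field K]
    {a b : κ → K} (ha : a ≠ 0) (hb : b ≠ 0) : ∃ g : GL κ K, (g : Matrix κ κ K) *ᵥ a = b := by
  let f : (K ∙ a) ≃ₗ[K] (K ∙ b) :=
    (LinearEquiv.coord K _ a ha).trans (LinearEquiv.toSpanNonzeroSingleton K _ b hb)
  obtain ⟨φ, hφ⟩ := Submodule.exists_linearEquiv_restrict_eq f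
  refine ⟨toLin.symm (LinearMap.GeneralLinearGroup.ofLinearEquiv φ), ?_⟩
  have hfa : f ⟨a, Submodule.mem_span_singleton_self a⟩ = b := by
    simp [f, LinearEquiv.coord_self]
  rw [← hfa, hφ]
  exact LinearMap.toMatrix'_mulVec (φ : (κ → K) →ₗ[K] κ → K) a

end Matrix

lemma Nat.card_eq_card_mul_of_forall_card_fiber {α β : Type*} [Finite α] [Finite β] (f : α → β)
    {N : ℕ} (h : ∀ b, Nat.card {a // f a = b} = N) : Nat.card α = Nat.card β * N := by
  have := Fintype.ofFinite β
  rw [← Nat.card_congr (Equiv.sigmaFiberEquiv f), Nat.card_sigma]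
  simp [h, Nat.card_eq_fintype_card]

lemma Nat.card_subtype_fun_ne_zero {μ K : Type*} [Fintype μ] [Zero K] [Finite K] :
    Nat.card {a : μ → K // a ≠ 0} = Nat.card K ^ Fintype.card μ - 1 := by
  classical
  have hcard := Nat.card_congr (Equiv.optionSubtypeNe (0 : μ → K))
  rw [Finite.card_option, Nat.card_fun, Nat.card_eq_fintype_card (α := μ)] at hcard
  omega

namespace AltGL

section Action

variable {ι R : Type*} [Fintype ι] [DecidableEq ι] [CommRing R]

instance : SMul (GL ι R) (AltGL ι R) where
  smul P A := ⟨P * A.1 * (P : Matrix ι ι R)ᵀ, A.2.1.mul_mul_transpose_s1 _, by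
    rw [det_mul, det_mul, det_transpose]
    exact ((isUnits_det_units P).mul A.2.2).mul (isUnits_det_units P)⟩

lemma coe_smul (P : GL ι R) (A : AltGL ι R) : (P • A).1 = P * A.1 * (P : Matrix ι ι R)ᵀ :=
  rfl

instance : MulAction (GL ι R) (AltGL ι R) where
  one_smul A := Subtype.ext (by simp [coe_smul])
  mul_smul P Q A := Subtype.ext (by simp [coe_smul, transpose_mul, Matrix.mul_assoc])

def reindex {ι' : Type*} [Fintype ι'] [DecidableEq ι'] (e : ι ≃ ι') : AltGL ι R ≃ AltGL ι' R :=
  (Matrix.reindex e e).subtypeEquiv fun A => by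
    rw [isAlternating_reindex_iff, det_reindex_self]

lemma card_of_isEmpty [IsEmpty ι] : Nat.card (AltGL ι R) = 1 := by
  have : Unique (AltGL ι R) :=
    { default := ⟨0, ⟨Subsingleton.elim _ _, isEmptyElim⟩, by simp⟩
      uniq := fun _ => Subsingleton.elim _ _ }
  exact Nat.card_unique

end Action

section FirstRow

variable {κ μ R : Type*} [Fintype κ] [DecidableEq κ] [Fintype μ] [DecidableEq μ] [CommRing R]

lemma toBlocks₁₂_smul (g : GL κ R) (A : AltGL (Unit ⊕ κ) R) :
    (Units.map (fromBlocksOneHom Unit) g • A).1.toBlocks₁₂ () =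
      (g : Matrix κ κ R) *ᵥ A.1.toBlocks₁₂ () := by
  rw [coe_smul, Units.coe_map, toBlocks₁₂_fromBlocksOneHom_mul_mul_transpose]
  funext k
  simp [mul_apply, mulVec, dotProduct, mul_comm]

lemma toBlocks₁₂_ne_zero [Nontrivial R] (A : AltGL (Unit ⊕ κ) R) : A.1.toBlocks₁₂ () ≠ 0 := by
  intro h
  have hrow : ∀ j, A.1 (Sum.inl ()) j = 0 := by
    rintro (j | k)
    · exact A.2.1.2 _
    · exact congrFun h k
  exact not_isUnit_zero (det_eq_zero_of_row_eq_zero _ hrow ▸ A.2.2)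

lemma card_fiber_toBlocks₁₂_eq {K : Type*} [Field K] {a b : κ → K} (ha : a ≠ 0) (hb : b ≠ 0) :
    Nat.card {A : AltGL (Unit ⊕ κ) K // A.1.toBlocks₁₂ () = a} =
      Nat.card {A : AltGL (Unit ⊕ κ) K // A.1.toBlocks₁₂ () = b} := by
  obtain ⟨g, rfl⟩ := GeneralLinearGroup.exists_mulVec_eq ha hb
  refine Nat.card_congr ((MulAction.toPerm (Units.map (fromBlocksOneHom Unit) g)).subtypeEquiv
    fun A => ?_)
  rw [MulAction.toPerm_apply, toBlocks₁₂_smul]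
  exact (mulVec_injective_of_isUnit g.isUnit).eq_iff.symm

def fiberSingleEquiv :
    {A : AltGL (Unit ⊕ (Unit ⊕ μ)) R // A.1.toBlocks₁₂ () = Pi.single (Sum.inl ()) 1} ≃
      (μ → R) × AltGL μ R where
  toFun A := (A.1.1.toBlocks₂₂.toBlocks₁₂ (), ⟨A.1.1.toBlocks₂₂.toBlocks₂₂,
    A.1.2.1.toBlocks₂₂.toBlocks₂₂, by
      rw [← det_altBorder_single_altBorder (A.1.1.toBlocks₂₂.toBlocks₁₂ ()),
        ← A.1.2.1.eq_altBorder_single_altBorder A.2]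
      exact A.1.2.2⟩)
  invFun x := ⟨⟨altBorder (Pi.single (Sum.inl ()) 1) (altBorder x.1 x.2.1),
    (x.2.2.1.altBorder _).altBorder _, by rw [det_altBorder_single_altBorder]; exact x.2.2.2⟩, rfl⟩
  left_inv A := Subtype.ext (Subtype.ext (A.1.2.1.eq_altBorder_single_altBorder A.2).symm)
  right_inv x := rfl

theorem card_unit_sum_unit_sum {K : Type*} [Field K] [Finite K] :
    Nat.card (AltGL (Unit ⊕ (Unit ⊕ μ)) K) =
      (Nat.card K ^ (Fintype.card μ + 1) - 1) * Nat.card K ^ Fintype.card μ *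
        Nat.card (AltGL μ K) := by
  let e : Unit ⊕ μ → K := Pi.single (Sum.inl ()) 1
  have he : e ≠ 0 := Pi.single_ne_zero_iff.mpr one_ne_zero
  let firstRow (A : AltGL (Unit ⊕ (Unit ⊕ μ)) K) : {a : Unit ⊕ μ → K // a ≠ 0} :=
    ⟨A.1.toBlocks₁₂ (), toBlocks₁₂_ne_zero A⟩
  have hfiber (a : {a : Unit ⊕ μ → K // a ≠ 0}) : Nat.card {A // firstRow A = a} =
      Nat.card {A : AltGL (Unit ⊕ (Unit ⊕ μ)) K // A.1.toBlocks₁₂ () = e} :=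
    (Nat.card_congr (Equiv.subtypeEquivRight fun _ => Subtype.ext_iff)).trans
      (card_fiber_toBlocks₁₂_eq a.2 he)
  rw [Nat.card_eq_card_mul_of_forall_card_fiber firstRow hfiber, Nat.card_congr fiberSingleEquiv,
    Nat.card_prod, Nat.card_fun, Nat.card_subtype_fun_ne_zero, Nat.card_eq_fintype_card (α := μ),
    Fintype.card_sum, Fintype.card_unit, add_comm 1, mul_assoc]

end FirstRow

end AltGL

theorem stmt1_general (p m : ℕ) (hp : p.Prime) (h2 : 2 ≤ m) :
    Nat.card {A : Matrix (Fin m) (Fin m) (ZMod p) // A.IsAlternating ∧ IsUnit A.det} =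
      (p ^ (m - 1) - 1) * p ^ (m - 2) *
        Nat.card {A : Matrix (Fin (m - 2)) (Fin (m - 2)) (ZMod p) //
          A.IsAlternating ∧ IsUnit A.det} ∧
    Nat.card {A : Matrix (Fin 0) (Fin 0) (ZMod p) // A.IsAlternating ∧ IsUnit A.det} = 1 := by
  have : Fact p.Prime := ⟨hp⟩
  refine ⟨?_, AltGL.card_of_isEmpty⟩
  obtain ⟨n, rfl⟩ := Nat.exists_eq_add_of_le' h2
  have e : Fin (n + 2) ≃ Unit ⊕ (Unit ⊕ Fin n) := Fintype.equivOfCardEq (by simp; omega)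
  rw [Nat.card_congr (AltGL.reindex e), AltGL.card_unit_sum_unit_sum, Nat.card_zmod,
    Fintype.card_fin]
  rfl

/-- The number of invertible alternating `m×m` matrices over `𝔽_p` (for `m` even, `m ≥ 2`)
satisfies `#GL_m(F_p)_alt = (p^{m-1} - 1) · p^{m-2} · #GL_{m-2}(F_p)_alt`,
with `#GL_0(F_p)_alt = 1`. -/
theorem stmt1 (p m : ℕ) (hp : p.Prime) (hm : Even m) (h2 : 2 ≤ m) :
    Nat.card {A : Matrix (Fin m) (Fin m) (ZMod p) // A.IsAlternating ∧ IsUnit A.det} =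
      (p ^ (m - 1) - 1) * p ^ (m - 2) *
        Nat.card {A : Matrix (Fin (m - 2)) (Fin (m - 2)) (ZMod p) //
          A.IsAlternating ∧ IsUnit A.det} ∧
    Nat.card {A : Matrix (Fin 0) (Fin 0) (ZMod p) // A.IsAlternating ∧ IsUnit A.det} = 1 :=
  stmt1_general p m hp h2
end

section
/- Let D be an n×n matrix over Z_p with det D ≠ 0. Then the set of matrices A ∈ M_n(Z_p) with det A ≠ 0 and A^{-1} - D^{-1} ∈ M_n(Z_p) equals the set of matrices A ∈ D + D·M_n(Z_p)·D such that the reductions mod p of A and D have equal rank. -/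
/-!
Both conditions say that `A = D + D N D = D (1 + N D)` for some integral `N` with `1 + N D`
invertible over `ℤ_p`.

If `A⁻¹ - D⁻¹ = B` is integral, then `D B A = A B D = D - A`, so `N = B A B - B` is integral,
`A = D + D N D`, and `1 + N D = 1 - B A` has the integral inverse `1 + B D`. Conversely, if
`C (1 + N D) = 1` then `A⁻¹ - D⁻¹ = -C N`.

Modulo `p`, right multiplication by the unit `1 + N D` preserves rank. Conversely, if
`rank (D + D N D) = rank D` over a field then `ker D = ker (D (1 + N D))`, so a vector `v`
with `v = -N D v` lies in `ker D` and hence vanishes; thus `det (1 + N D)` is nonzero mod `p`,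
i.e. a `p`-adic unit.
-/

namespace Matrix

variable {n : Type*} [Fintype n] [DecidableEq n]

theorem isUnit_det_one_add_mul_of_rank_eq {K : Type*} [Field K] {D N : Matrix n n K}
    (h : (D + D * N * D).rank = D.rank) : IsUnit (1 + N * D).det := by
  have hker : LinearMap.ker D.mulVecLin = LinearMap.ker (D + D * N * D).mulVecLin := by
    refine Submodule.eq_of_le_of_finrank_eq (fun v hv => ?_) ?_
    · rw [LinearMap.mem_ker, mulVecLin_apply] at hv ⊢
      rw [show D + D * N * D = (1 + D * N) * D by noncomm_ring, ← mulVec_mulVec, hv, mulVec_zero]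
    · have hA := (D + D * N * D).mulVecLin.finrank_range_add_finrank_ker
      have hD := D.mulVecLin.finrank_range_add_finrank_ker
      rw [rank, rank] at h
      omega
  rw [isUnit_iff_ne_zero, Ne, ← exists_mulVec_eq_zero_iff]
  rintro ⟨v, hv0, hv⟩
  have hDv : D *ᵥ v = 0 := by
    have hvA : v ∈ LinearMap.ker (D + D * N * D).mulVecLin := by
      rw [LinearMap.mem_ker, mulVecLin_apply,
        show D + D * N * D = D * (1 + N * D) by noncomm_ring, ← mulVec_mulVec, hv, mulVec_zero]
    rwa [← hker, LinearMap.mem_ker, mulVecLin_apply] at hvA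
  apply hv0
  simpa [add_mulVec, ← mulVec_mulVec, hDv] using hv

theorem rank_map_add_mul_mul_eq_iff {R K : Type*} [CommRing R] [Field K] (f : R →+* K)
    [IsLocalHom f] (D N : Matrix n n R) :
    ((D + D * N * D).map f).rank = (D.map f).rank ↔ IsUnit (1 + N * D).det := by
  have hmap : (D + D * N * D).map f = D.map f + D.map f * N.map f * D.map f := by
    simp [Matrix.map_add, Matrix.map_mul]
  have hdet : f (1 + N * D).det = (1 + N.map f * D.map f).det := by
    simp [RingHom.map_det, Matrix.map_add, Matrix.map_mul]
  rw [hmap]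
  constructor
  · intro h
    exact (isUnit_map_iff f _).mp (hdet ▸ isUnit_det_one_add_mul_of_rank_eq h)
  · intro hU
    rw [show D.map f + D.map f * N.map f * D.map f = D.map f * (1 + N.map f * D.map f) by
      noncomm_ring]
    exact rank_mul_eq_left_of_isUnit_det _ _ (hdet ▸ hU.map f)

section InverseDifference

variable {S : Type*} [CommRing S]

theorem mul_mul_eq_sub_of_inv_sub_inv_eq {A D B : Matrix n n S} (hA : IsUnit A.det)
    (hD : IsUnit D.det) (h : A⁻¹ - D⁻¹ = B) : D * B * A = D - A ∧ A * B * D = D - A := by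
  subst h
  constructor
  · rw [mul_sub, mul_nonsing_inv _ hD, sub_mul, Matrix.mul_assoc, nonsing_inv_mul _ hA, one_mul,
      mul_one]
  · rw [mul_sub, mul_nonsing_inv _ hA, sub_mul, Matrix.mul_assoc, nonsing_inv_mul _ hD, one_mul,
      mul_one]

theorem inv_add_mul_mul_sub_inv {D N C : Matrix n n S} (hD : IsUnit D.det)
    (hC : C * (1 + N * D) = 1) : (D + D * N * D)⁻¹ - D⁻¹ = -(C * N) := by
  rw [sub_eq_iff_eq_add']
  refine inv_eq_left_inv ?_
  calc (D⁻¹ + -(C * N)) * (D + D * N * D)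
      = (D⁻¹ * D - C * N * D) * (1 + N * D) := by noncomm_ring
    _ = (C * (1 + N * D) - C * N * D) * (1 + N * D) := by rw [nonsing_inv_mul _ hD, hC]
    _ = C * (1 + N * D) := by noncomm_ring
    _ = 1 := hC

end InverseDifference

theorem inv_map_sub_inv_map_mem_range_iff {R K : Type*} [CommRing R] [Field K] {φ : R →+* K}
    (hφ : Function.Injective φ) {D : Matrix n n R} (hD : D.det ≠ 0) (A : Matrix n n R) :
    (A.det ≠ 0 ∧ ∃ B : Matrix n n R, (A.map φ)⁻¹ - (D.map φ)⁻¹ = B.map φ) ↔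
      ∃ N, A = D + D * N * D ∧ IsUnit (1 + N * D).det := by
  have hmap : ∀ X : Matrix n n R, X.map φ = φ.mapMatrix X := fun _ => rfl
  have hinj : Function.Injective φ.mapMatrix := map_injective (n := n) (m := n) hφ
  have hunit : ∀ X : Matrix n n R, X.det ≠ 0 → IsUnit (φ.mapMatrix X).det := fun X hX => by
    rw [← RingHom.map_det]
    exact isUnit_iff_ne_zero.mpr ((map_ne_zero_iff φ hφ).mpr hX)
  simp only [hmap]
  constructor
  · rintro ⟨hA, B, hB⟩
    obtain ⟨hDBA, hABD⟩ : D * B * A = D - A ∧ A * B * D = D - A := by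
      have h := mul_mul_eq_sub_of_inv_sub_inv_eq (hunit A hA) (hunit D hD) hB
      simp only [← map_mul, ← map_sub] at h
      exact ⟨hinj h.1, hinj h.2⟩
    have hND : (B * A * B - B) * D = -(B * A) := by
      calc (B * A * B - B) * D = B * (A * B * D) - B * D := by noncomm_ring
        _ = -(B * A) := by rw [hABD]; noncomm_ring
    refine ⟨B * A * B - B, ?_, isUnit_det_of_right_inverse (B := 1 + B * D) ?_⟩
    · rw [show D * (B * A * B - B) * D = D * B * (A * B * D) - D * B * D by noncomm_ring, hABD,
        mul_sub, hDBA]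
      abel
    · calc (1 + (B * A * B - B) * D) * (1 + B * D) = 1 + B * D - B * A - B * (A * B * D) := by
            rw [hND]; noncomm_ring
        _ = 1 := by rw [hABD]; noncomm_ring
  · rintro ⟨N, rfl, hU⟩
    refine ⟨?_, -((1 + N * D)⁻¹ * N), ?_⟩
    · rw [show D + D * N * D = D * (1 + N * D) by noncomm_ring, det_mul]
      exact (hU.mul_left_eq_zero).not.mpr hD
    · have hC := congrArg φ.mapMatrix (nonsing_inv_mul _ hU)
      simp only [map_mul, map_add, map_one] at hC
      simp only [map_neg, map_mul, map_add]
      exact inv_add_mul_mul_sub_inv (hunit D hD) hC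

end Matrix

/-- Let `D` be an `n×n` matrix over `ℤ_p` with `det D ≠ 0`.  The set of `A ∈ M_n(ℤ_p)` with
`det A ≠ 0` and `A⁻¹ - D⁻¹ ∈ M_n(ℤ_p)` (inverses taken over `ℚ_p`) equals the set of
`A ∈ D + D·M_n(ℤ_p)·D` whose reduction mod `p` has the same rank as that of `D`. -/
theorem stmt4 (p : ℕ) [Fact p.Prime] (n : ℕ) (D : Matrix (Fin n) (Fin n) ℤ_[p])
    (hD : D.det ≠ 0) :
    {A : Matrix (Fin n) (Fin n) ℤ_[p] | A.det ≠ 0 ∧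
        ∃ B : Matrix (Fin n) (Fin n) ℤ_[p],
          (A.map ((↑) : ℤ_[p] → ℚ_[p]))⁻¹ - (D.map ((↑) : ℤ_[p] → ℚ_[p]))⁻¹ =
            B.map ((↑) : ℤ_[p] → ℚ_[p])} =
      {A : Matrix (Fin n) (Fin n) ℤ_[p] |
        (∃ N : Matrix (Fin n) (Fin n) ℤ_[p], A = D + D * N * D) ∧
          (A.map (PadicInt.toZMod (p := p))).rank = (D.map (PadicInt.toZMod (p := p))).rank} := by
  ext A
  refine (Matrix.inv_map_sub_inv_map_mem_range_iff (φ := PadicInt.Coe.ringHom) Subtype.coe_injective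
    hD A).trans ⟨?_, ?_⟩
  · rintro ⟨N, rfl, hU⟩
    exact ⟨⟨N, rfl⟩, (Matrix.rank_map_add_mul_mul_eq_iff PadicInt.toZMod D N).mpr hU⟩
  · rintro ⟨⟨N, rfl⟩, hrank⟩
    exact ⟨N, rfl, (Matrix.rank_map_add_mul_mul_eq_iff PadicInt.toZMod D N).mp hrank⟩
end

section
/- Let n ∈ Z_{>0}, and let δ : A → B be a homomorphism of Z/nZ-modules such that for every divisor m of n the induced map A/mA → B/mB is injective. Then δ(A) is a direct summand of B. -/
/-!
Write `B` for an abelian group killed by `n > 0`. A subgroup `N` is pure (`N ∩ mB = mN` for all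
`m`) as soon as this holds for the divisors `m ∣ n`, by Bézout; so the hypothesis says that
`δ(A)` is pure in `B`.

Pure subgroups of `B` are direct summands, by induction on `n`. Let `p` be a prime factor of `n`.
Then `pN` is pure in `pB`, which is killed by `n / p`, so `pB = pN ⊕ C₁`. Every element of `B` is
congruent modulo `N` to one of `B' = {b | pb ∈ C₁}`, and a complement of `N` is the preimage in
`B'` of a complement of the image of `N ∩ B'` in the `𝔽_p`-vector space `B' / pB'`. It meets `N`
trivially since, by purity, `N ∩ pB' ⊆ pN ∩ C₁ = 0`.
-/

open Pointwise

namespace AddSubgroup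

variable {B : Type*} [AddCommGroup B]

/-- `N ∩ mB = mN` for every `m : ℕ`. -/
def IsPure (N : AddSubgroup B) : Prop :=
  ∀ (m : ℕ) (b : B), m • b ∈ N → ∃ y ∈ N, m • y = m • b

theorem isPure_of_forall_dvd {n : ℕ} (hB : ∀ b : B, n • b = 0) {N : AddSubgroup B}
    (hN : ∀ m, m ∣ n → ∀ b : B, m • b ∈ N → ∃ y ∈ N, m • y = m • b) : N.IsPure := by
  intro m b hmb
  have hgm : m.gcd n * (m / m.gcd n) = m := Nat.mul_div_cancel' (m.gcd_dvd_left n)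
  obtain ⟨y, hyN, hy⟩ := hN (m.gcd n) (m.gcd_dvd_right n) ((m / m.gcd n) • b)
    (by rwa [smul_smul, hgm])
  rw [smul_smul, hgm] at hy
  have hbezout : ((m.gcd n : ℕ) : ℤ) • y = m • (m.gcdA n • y) := by
    rw [Nat.gcd_eq_gcd_ab, add_zsmul, mul_zsmul, mul_zsmul, natCast_zsmul, natCast_zsmul, hB,
      add_zero]
  exact ⟨m.gcdA n • y, zsmul_mem hyN _, by rw [← hbezout, natCast_zsmul, hy]⟩

theorem IsPure.pointwise_smul_addSubgroupOf {N : AddSubgroup B} (hN : N.IsPure) (p : ℕ) :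
    ((p • N).addSubgroupOf (p • ⊤)).IsPure := by
  intro m b' hmb
  obtain ⟨b, -, hb⟩ := (mem_smul_pointwise_iff_exists _ _ _).1 b'.2
  obtain ⟨x, hxN, hx⟩ := (mem_smul_pointwise_iff_exists _ _ _).1 (mem_addSubgroupOf.1 hmb)
  have hmpb : (m * p) • b ∈ N := by
    rw [mul_smul, hb, ← coe_nsmul, ← hx]
    exact nsmul_mem hxN p
  obtain ⟨y, hyN, hy⟩ := hN (m * p) b hmpb
  refine ⟨⟨p • y, smul_mem_pointwise_smul _ _ _ (mem_top y)⟩, ?_, ?_⟩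
  · exact mem_addSubgroupOf.2 (smul_mem_pointwise_smul _ _ _ hyN)
  · ext
    rw [coe_nsmul, coe_nsmul, ← hb]
    change m • p • y = m • p • b
    rw [← mul_smul, hy, mul_smul]

theorem exists_sup_eq_top_inf_le_pointwise_smul_top (p : ℕ) [Fact p.Prime]
    (M : AddSubgroup B) : ∃ C : AddSubgroup B, M ⊓ C ≤ p • ⊤ ∧ M ⊔ C = ⊤ := by
  let π := QuotientAddGroup.mk' (p • ⊤ : AddSubgroup B)
  have hπ : Function.Surjective π := QuotientAddGroup.mk'_surjective _
  have hker : π.ker = p • ⊤ := QuotientAddGroup.ker_mk' _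
  have hV : ∀ v : B ⧸ (p • ⊤ : AddSubgroup B), p • v = 0 := by
    rintro ⟨b⟩
    exact (QuotientAddGroup.eq_zero_iff _).2 (smul_mem_pointwise_smul _ _ _ (mem_top b))
  let := AddCommGroup.zmodModule hV
  obtain ⟨W, hW⟩ := Submodule.exists_isCompl (toZModSubmodule p (M.map π))
  have hMW : IsCompl (M.map π) ((toZModSubmodule p).symm W) :=
    (toZModSubmodule p).isCompl_iff.2 (by rwa [OrderIso.apply_symm_apply])
  refine ⟨((toZModSubmodule p).symm W).comap π, ?_, ?_⟩
  · calc M ⊓ ((toZModSubmodule p).symm W).comap π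
        ≤ (M.map π).comap π ⊓ ((toZModSubmodule p).symm W).comap π :=
          inf_le_inf_right _ (le_comap_map _ _)
      _ = p • ⊤ := by
          rw [← comap_inf, hMW.inf_eq_bot, AddMonoidHom.comap_bot, hker]
  · calc M ⊔ ((toZModSubmodule p).symm W).comap π
        = (M.map π).comap π ⊔ ((toZModSubmodule p).symm W).comap π := by
          rw [comap_map_eq, hker, sup_assoc,
            sup_eq_right.2 (hker.ge.trans (ker_le_comap π _))]
      _ = ⊤ := by rw [comap_sup_eq π _ _ hπ, hMW.sup_eq_top, comap_top]

theorem IsPure.exists_isCompl_of_pointwise_smul (p : ℕ) [Fact p.Prime] {N : AddSubgroup B}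
    (hN : N.IsPure) {C₁ : AddSubgroup B} (hdisj : Disjoint (p • N) C₁)
    (hsup : p • N ⊔ C₁ = p • ⊤) : ∃ C : AddSubgroup B, IsCompl N C := by
  let B' := C₁.comap (nsmulAddMonoidHom p)
  have hNB' : N ⊔ B' = ⊤ := by
    refine eq_top_iff.2 fun b _ => ?_
    have hpb : p • b ∈ p • N ⊔ C₁ := hsup ▸ smul_mem_pointwise_smul _ _ _ (mem_top b)
    obtain ⟨u, hu, c, hc, hxc⟩ := mem_sup.1 hpb
    obtain ⟨x, hxN, rfl⟩ := (mem_smul_pointwise_iff_exists _ _ _).1 hu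
    have hbx : b - x ∈ B' := by
      change p • (b - x) ∈ C₁
      rwa [smul_sub, ← hxc, add_sub_cancel_left]
    simpa using add_mem_sup hxN hbx
  obtain ⟨C₀, hinf, hsup₀⟩ :=
    exists_sup_eq_top_inf_le_pointwise_smul_top p (N.addSubgroupOf B')
  refine ⟨C₀.map B'.subtype, disjoint_iff_inf_le.2 ?_, codisjoint_iff.2 ?_⟩
  · rintro - ⟨hxN, c, hc, rfl⟩
    obtain ⟨d, -, hd⟩ :=
      (mem_smul_pointwise_iff_exists _ _ _).1 (hinf ⟨mem_addSubgroupOf.2 hxN, hc⟩)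
    have hcd : (c : B) = p • (d : B) := by rw [← hd]; rfl
    have hcC₁ : (c : B) ∈ C₁ := hcd ▸ d.2
    obtain ⟨y, hyN, hy⟩ := hN p d (hcd ▸ hxN)
    have hcpN : (c : B) ∈ p • N := hcd ▸ hy ▸ smul_mem_pointwise_smul _ _ _ hyN
    exact hdisj.le_bot ⟨hcpN, hcC₁⟩
  · calc N ⊔ C₀.map B'.subtype
        = N ⊔ ((N.addSubgroupOf B').map B'.subtype ⊔ C₀.map B'.subtype) := by
          rw [addSubgroupOf_map_subtype, ← sup_assoc, sup_inf_self]
      _ = ⊤ := by rw [← map_sup, hsup₀, ← AddMonoidHom.range_eq_map, range_subtype, hNB']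

theorem IsPure.exists_isCompl {n : ℕ} (hn : 0 < n) (hB : ∀ b : B, n • b = 0)
    {N : AddSubgroup B} (hN : N.IsPure) : ∃ C : AddSubgroup B, IsCompl N C := by
  induction n using Nat.strong_induction_on generalizing B with
  | _ n ih =>
  rcases eq_or_ne n 1 with rfl | hn1
  · have hNtop : N = ⊤ := eq_top_iff.2 fun b _ => by
      rw [show b = 0 by simpa using hB b]
      exact N.zero_mem
    exact ⟨⊥, hNtop ▸ isCompl_top_bot⟩
  set p := n.minFac
  have hp : Fact p.Prime := ⟨Nat.minFac_prime hn1⟩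
  have hpq : p * (n / p) = n := Nat.mul_div_cancel' n.minFac_dvd
  have hpB : ∀ b : ↥(p • ⊤ : AddSubgroup B), (n / p) • b = 0 := by
    rintro ⟨-, b, -, rfl⟩
    ext
    change (n / p) • p • b = 0
    rw [smul_smul, mul_comm, hpq, hB]
  obtain ⟨C₁, hC₁⟩ := ih (n / p) (Nat.div_lt_self hn hp.out.one_lt)
    (Nat.div_pos (Nat.minFac_le hn) n.minFac_pos) hpB (hN.pointwise_smul_addSubgroupOf p)
  have hpN : ((p • N).addSubgroupOf (p • ⊤)).map (p • ⊤ : AddSubgroup B).subtype = p • N :=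
    map_addSubgroupOf_eq_of_le (map_mono le_top)
  refine hN.exists_isCompl_of_pointwise_smul p (C₁ := C₁.map (p • ⊤ : AddSubgroup B).subtype)
    ?_ ?_
  · exact hpN ▸ disjoint_map (subtype_injective _) hC₁.disjoint
  · rw [← hpN, ← map_sup, hC₁.sup_eq_top, ← AddMonoidHom.range_eq_map, range_subtype]

end AddSubgroup

/-- Let `δ : A → B` be a homomorphism of `ℤ/nℤ`-modules such that for every divisor `m` of
`n` the induced map `A/mA → B/mB` is injective.  Then `δ(A)` is a direct summand of `B`. -/
theorem stmt8 (n : ℕ) (hn : 0 < n) (A B : Type*) [AddCommGroup A] [Module (ZMod n) A]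
    [AddCommGroup B] [Module (ZMod n) B] (δ : A →ₗ[ZMod n] B)
    (hinj : ∀ m : ℕ, m ∣ n → ∀ a : A, (∃ b : B, δ a = m • b) → ∃ a' : A, a = m • a') :
    ∃ C : Submodule (ZMod n) B, IsCompl (LinearMap.range δ) C := by
  have hB : ∀ b : B, n • b = 0 := fun b => by
    rw [← Nat.cast_smul_eq_nsmul (ZMod n), ZMod.natCast_self, zero_smul]
  have hpure : (LinearMap.range δ).toAddSubgroup.IsPure := by
    refine AddSubgroup.isPure_of_forall_dvd hB fun m hm b ⟨a, ha⟩ => ?_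
    obtain ⟨a', rfl⟩ := hinj m hm a ⟨b, ha⟩
    exact ⟨δ a', ⟨a', rfl⟩, by rw [← ha, map_nsmul]⟩
  obtain ⟨C, hC⟩ := hpure.exists_isCompl hn hB
  refine ⟨AddSubgroup.toZModSubmodule n C, ?_⟩
  simpa using (AddSubgroup.toZModSubmodule n).isCompl hC
end

section
/- Let p be a prime, e ≥ 1, and S_e = SL_2(Z/p^eZ). Define Γ_m = ker(SL_2(Z/p^eZ) → SL_2(Z/p^mZ)) for 1 ≤ m ≤ e. Then Γ_2 = Γ_1^2 [Γ_1, Γ_1], i.e., the subgroup of Γ_1 generated by squares and commutators of elements of Γ_1 equals Γ_2, when p = 2. -/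
/-!
Write `Γ(I)` for the kernel of reduction of `SL₂(R)` modulo an ideal `I`. If `a = 1 + 2X` and
`b = 1 + 2Y`, then `a² = 1 + 4(X + X²)` and `ab - ba = 4(XY - YX)`, so squares and commutators
of `Γ(2)` lie in `Γ(4)`; this part works in `SLₙ`.

Conversely let `k ∈ Γ(4)`, so `u := k₀₀ = 1 + 4t` is a unit when `2` is nilpotent. The
commutator `c` of the lower transvection by `2` and the upper transvection by `-2t` also lies in
`Γ(4)` and has `c₀₀ = u`. Two elements of `SL₂` with the same unit `(0,0)` entry differ by a
lower transvection on the left and an upper one on the right, here by entries divisible by `4`,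
and such a transvection is the square of the transvection by half its entry, which lies in `Γ(2)`.
-/

open scoped commutatorElement MatrixGroups

lemma ZMod.ker_castHom {d n : ℕ} [NeZero n] (h : d ∣ n) :
    RingHom.ker (ZMod.castHom h (ZMod d)) = Ideal.span {(d : ZMod n)} := by
  ext x
  rw [RingHom.mem_ker, Ideal.mem_span_singleton]
  constructor
  · rw [ZMod.castHom_apply, ZMod.cast_eq_val, ZMod.natCast_eq_zero_iff]
    rintro ⟨m, hm⟩
    exact ⟨m, by rw [← ZMod.natCast_zmod_val x, hm, Nat.cast_mul]⟩
  · rintro ⟨y, rfl⟩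
    rw [map_mul, map_natCast, ZMod.natCast_self, zero_mul]

namespace Subgroup

variable {G : Type*} [Group G]

/-- The subgroup `H²[H, H]`. -/
def closureSqCommutator (H : Subgroup G) : Subgroup G :=
  closure ({x | ∃ a ∈ H, x = a ^ 2} ∪ {x | ∃ a ∈ H, ∃ b ∈ H, x = ⁅a, b⁆})

lemma sq_mem_closureSqCommutator {H : Subgroup G} {a : G} (ha : a ∈ H) :
    a ^ 2 ∈ closureSqCommutator H :=
  subset_closure (Or.inl ⟨a, ha, rfl⟩)

lemma commutatorElement_mem_closureSqCommutator {H : Subgroup G} {a b : G} (ha : a ∈ H)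
    (hb : b ∈ H) : ⁅a, b⁆ ∈ closureSqCommutator H :=
  subset_closure (Or.inr ⟨a, ha, b, hb, rfl⟩)

lemma closureSqCommutator_le {H K : Subgroup G} (hsq : ∀ a ∈ H, a ^ 2 ∈ K)
    (hcomm : ∀ a ∈ H, ∀ b ∈ H, ⁅a, b⁆ ∈ K) : closureSqCommutator H ≤ K := by
  rw [closureSqCommutator, closure_le]
  rintro x (⟨a, ha, rfl⟩ | ⟨a, ha, b, hb, rfl⟩)
  exacts [hsq a ha, hcomm a ha b hb]

end Subgroup

namespace Matrix.SpecialLinearGroup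

open Subgroup

section

variable {n R S T : Type*} [Fintype n] [DecidableEq n] [CommRing R] [CommRing S] [CommRing T]
  {f : R →+* S} {g : R →+* T}

lemma map_eq_map_iff_exists_smul {d : R} (hf : RingHom.ker f = Ideal.span {d})
    {a b : SpecialLinearGroup n R} :
    map f a = map f b ↔ ∃ X : Matrix n n R, (a : Matrix n n R) - b = d • X := by
  simp only [SpecialLinearGroup.ext_iff, map_apply_coe, RingHom.mapMatrix_apply, map_apply]
  constructor
  · intro h
    have hdvd : ∀ i j, d ∣ (a : Matrix n n R) i j - b i j := fun i j => by
      rw [← Ideal.mem_span_singleton, ← hf, RingHom.mem_ker, map_sub, sub_eq_zero]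
      exact h i j
    choose X hX using hdvd
    exact ⟨Matrix.of X, by ext i j; simp [hX]⟩
  · rintro ⟨X, hX⟩ i j
    rw [← sub_eq_zero, ← map_sub, ← RingHom.mem_ker, hf, Ideal.mem_span_singleton]
    exact ⟨X i j, by simpa using congr($hX i j)⟩

lemma exists_eq_one_add_smul_of_mem_ker {d : R} (hf : RingHom.ker f = Ideal.span {d})
    {a : SpecialLinearGroup n R} (ha : a ∈ (map f).ker) :
    ∃ X : Matrix n n R, (a : Matrix n n R) = 1 + d • X := by
  obtain ⟨X, hX⟩ := (map_eq_map_iff_exists_smul hf).1 (ha.trans (map_one _).symm)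
  exact ⟨X, by rw [← hX, coe_one, add_sub_cancel]⟩

lemma sq_mem_ker_map (hf : RingHom.ker f = Ideal.span {2}) (hg : RingHom.ker g = Ideal.span {4})
    {a : SpecialLinearGroup n R} (ha : a ∈ (map f).ker) : a ^ 2 ∈ (map g).ker := by
  obtain ⟨X, hX⟩ := exists_eq_one_add_smul_of_mem_ker hf ha
  rw [MonoidHom.mem_ker, ← map_one (map g), map_eq_map_iff_exists_smul hg]
  refine ⟨X + X * X, ?_⟩
  rw [coe_pow, coe_one, hX, sq]
  simp only [mul_add, add_mul, mul_one, one_mul, smul_mul_smul]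
  module

lemma commutatorElement_mem_ker_map (hf : RingHom.ker f = Ideal.span {2})
    (hg : RingHom.ker g = Ideal.span {4}) {a b : SpecialLinearGroup n R}
    (ha : a ∈ (map f).ker) (hb : b ∈ (map f).ker) : ⁅a, b⁆ ∈ (map g).ker := by
  obtain ⟨X, hX⟩ := exists_eq_one_add_smul_of_mem_ker hf ha
  obtain ⟨Y, hY⟩ := exists_eq_one_add_smul_of_mem_ker hf hb
  have hab : map g (a * b) = map g (b * a) := by
    refine (map_eq_map_iff_exists_smul hg).2 ⟨X * Y - Y * X, ?_⟩
    rw [coe_mul, coe_mul, hX, hY]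
    simp only [mul_add, add_mul, mul_one, one_mul, smul_mul_smul]
    module
  rw [MonoidHom.mem_ker, show ⁅a, b⁆ = a * b * (b * a)⁻¹ by group, map_mul, map_inv, hab,
    mul_inv_cancel]

lemma closureSqCommutator_ker_map_le (hf : RingHom.ker f = Ideal.span {2})
    (hg : RingHom.ker g = Ideal.span {4}) :
    closureSqCommutator (map (n := n) f).ker ≤ (map g).ker :=
  closureSqCommutator_le (fun _ ha => sq_mem_ker_map hf hg ha)
    (fun _ ha _ hb => commutatorElement_mem_ker_map hf hg ha hb)

lemma map_transvection {i j : n} (hij : i ≠ j) (b : R) :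
    map f (transvection hij b) = transvection hij (f b) := by
  ext k l
  simp [transvection_coe, Matrix.one_apply, Matrix.single_apply, apply_ite f]

lemma transvection_mem_ker_map {i j : n} (hij : i ≠ j) {b : R} (hb : f b = 0) :
    transvection hij b ∈ (map f).ker := by
  rw [MonoidHom.mem_ker, map_transvection, hb, transvection_coeff_zero]

lemma transvection_four_mul_mem_closureSqCommutator (hf : f 2 = 0) {i j : n} (hij : i ≠ j)
    (r : R) : transvection hij (4 * r) ∈ closureSqCommutator (map f).ker := by
  rw [show 4 * r = 2 * r + 2 * r by ring, transvection_add, ← sq]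
  exact sq_mem_closureSqCommutator
    (transvection_mem_ker_map hij (by rw [map_mul, hf, zero_mul]))

end

section

variable {R S T : Type*} [CommRing R] [CommRing S] [CommRing T] {f : R →+* S} {g : R →+* T}

lemma coe_commutatorElement_transvection (x y : R) :
    ((⁅transvection (one_ne_zero : (1 : Fin 2) ≠ 0) x, transvection zero_ne_one y⁆ : SL(2, R)) :
      Matrix (Fin 2) (Fin 2) R) =
      !![1 - x * y, x * y ^ 2; -(x ^ 2 * y), 1 + x * y + x ^ 2 * y ^ 2] := by
  rw [commutatorElement_def, transvection_inv, transvection_inv]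
  ext i j
  fin_cases i <;> fin_cases j <;>
    simp [transvection_coe, Matrix.mul_apply, Fin.sum_univ_two, Matrix.one_apply,
      Matrix.single_apply] <;> ring

lemma ext_of_isUnit_apply_zero_zero {g h : SL(2, R)} (hu : IsUnit (g 0 0))
    (h00 : g 0 0 = h 0 0) (h01 : g 0 1 = h 0 1) (h10 : g 1 0 = h 1 0) : g = h := by
  have hdg := g.det_coe
  have hdh := h.det_coe
  rw [Matrix.det_fin_two] at hdg hdh
  have h11 : g 1 1 = h 1 1 :=
    hu.mul_left_cancel <| by
      linear_combination hdg - hdh - h 1 1 * h00 + g 1 0 * h01 + h 0 1 * h10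
  ext i j
  fin_cases i <;> fin_cases j <;> assumption

lemma eq_transvection_mul_mul_transvection {g h : SL(2, R)} {u : Rˣ} (hg : g 0 0 = u)
    (hh : h 0 0 = u) :
    g = transvection (one_ne_zero : (1 : Fin 2) ≠ 0) ((g 1 0 - h 1 0) * ↑u⁻¹) * h *
      transvection zero_ne_one ((g 0 1 - h 0 1) * ↑u⁻¹) := by
  refine ext_of_isUnit_apply_zero_zero (hg ▸ u.isUnit) ?_ ?_ ?_ <;>
    simp [transvection_coe, Matrix.mul_apply, Fin.sum_univ_two, Matrix.one_apply,
      Matrix.single_apply]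
  · exact hg.trans hh.symm
  · linear_combination -(g 0 1 - h 0 1) * u.mul_inv - (g 0 1 - h 0 1) * ↑u⁻¹ * hh
  · linear_combination -(g 1 0 - h 1 0) * u.mul_inv - (g 1 0 - h 1 0) * ↑u⁻¹ * hh

lemma ker_map_le_closureSqCommutator (hf : f 2 = 0) (hg : RingHom.ker g = Ideal.span {4})
    (h2 : IsNilpotent (2 : R)) :
    (map (n := Fin 2) g).ker ≤ closureSqCommutator (map f).ker := by
  intro k hk
  obtain ⟨K, hK⟩ := exists_eq_one_add_smul_of_mem_ker hg hk
  have hk_apply (i j : Fin 2) : k i j = (1 : Matrix (Fin 2) (Fin 2) R) i j + 4 * K i j := by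
    simpa using congr($hK i j)
  set t := K 0 0
  obtain ⟨u, hu⟩ : IsUnit (1 + 4 * t) := by
    rw [show 4 * t = 2 * (2 * t) by ring]
    exact ((Commute.all _ _).isNilpotent_mul_right h2).isUnit_one_add
  set c : SL(2, R) :=
    ⁅transvection (one_ne_zero : (1 : Fin 2) ≠ 0) (2 : R), transvection zero_ne_one (-(2 * t))⁆
  have hc_apply (i j : Fin 2) : c i j = _ :=
    congr($(coe_commutatorElement_transvection (2 : R) (-(2 * t))) i j)
  have hc_mem : c ∈ closureSqCommutator (map f).ker :=
    commutatorElement_mem_closureSqCommutator (transvection_mem_ker_map _ hf)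
      (transvection_mem_ker_map _ (by simp [hf]))
  have hk00 : k 0 0 = u := by simp [hk_apply, hu, t]
  have hc00 : c 0 0 = u := by simp [hc_apply, hu]; ring
  rw [eq_transvection_mul_mul_transvection hk00 hc00,
    show (k 1 0 - c 1 0) * ↑u⁻¹ = 4 * ((K 1 0 - 2 * t) * ↑u⁻¹) by
      simp [hk_apply, hc_apply]; ring,
    show (k 0 1 - c 0 1) * ↑u⁻¹ = 4 * ((K 0 1 - 2 * t ^ 2) * ↑u⁻¹) by
      simp [hk_apply, hc_apply]; ring]
  exact mul_mem (mul_mem (transvection_four_mul_mem_closureSqCommutator hf _ _) hc_mem)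
    (transvection_four_mul_mem_closureSqCommutator hf _ _)

end

end Matrix.SpecialLinearGroup

open Matrix.SpecialLinearGroup

/-- For `p = 2` and `e ≥ 2`, with `Γ_m = ker(SL₂(ℤ/2^eℤ) → SL₂(ℤ/2^mℤ))`, the subgroup of
`Γ₁` generated by squares and commutators of elements of `Γ₁` equals `Γ₂`. -/
theorem stmt11 (e : ℕ) (he : 2 ≤ e)
    (Γ₁ Γ₂ : Subgroup (Matrix.SpecialLinearGroup (Fin 2) (ZMod (2 ^ e))))
    (hΓ₁ : Γ₁ = MonoidHom.ker (Matrix.SpecialLinearGroup.map (n := Fin 2)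
      (ZMod.castHom (show 2 ^ 1 ∣ 2 ^ e from pow_dvd_pow 2 (by omega)) (ZMod (2 ^ 1)))))
    (hΓ₂ : Γ₂ = MonoidHom.ker (Matrix.SpecialLinearGroup.map (n := Fin 2)
      (ZMod.castHom (show 2 ^ 2 ∣ 2 ^ e from pow_dvd_pow 2 he) (ZMod (2 ^ 2))))) :
    Subgroup.closure ({x | ∃ a ∈ Γ₁, x = a ^ 2} ∪
      {x | ∃ a ∈ Γ₁, ∃ b ∈ Γ₁, x = ⁅a, b⁆}) = Γ₂ := by
  subst hΓ₁ hΓ₂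
  have hker₁ := ZMod.ker_castHom (show 2 ^ 1 ∣ 2 ^ e from pow_dvd_pow 2 (by omega))
  have hker₂ := ZMod.ker_castHom (show 2 ^ 2 ∣ 2 ^ e from pow_dvd_pow 2 he)
  rw [show ((2 ^ 1 : ℕ) : ZMod (2 ^ e)) = 2 by norm_num] at hker₁
  rw [show ((2 ^ 2 : ℕ) : ZMod (2 ^ e)) = 4 by norm_num] at hker₂
  have h2 : IsNilpotent (2 : ZMod (2 ^ e)) := ⟨e, by exact_mod_cast ZMod.natCast_self (2 ^ e)⟩
  refine le_antisymm (closureSqCommutator_ker_map_le hker₁ hker₂)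
    (ker_map_le_closureSqCommutator ?_ hker₂ h2)
  rw [← RingHom.mem_ker, hker₁]
  exact Ideal.mem_span_singleton_self 2
end

section
/- Let A be a field, a discrete valuation ring, or a quotient thereof, and equip A^{2n} with the hyperbolic quadratic form Q(x,y) = Σ x_i y_i. Then the orthogonal group O(Q)(A) acts transitively on the set of maximal isotropic free direct summands of A^{2n} of rank n. -/
/-!
Let `e₁, …, eₙ` be a basis of `Z` and `B` the polar form of `Q`. The coordinate functionals of
`Z`, extended by zero on a complement, are represented through the unimodular form `B` by vectors
`w₁, …, wₙ` with `B(eᵢ, wⱼ) = δᵢⱼ`. Writing `Q(Σ bⱼ wⱼ) = β(b, b)` for a triangular bilinear form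
`β` and replacing `wⱼ` by `fⱼ = wⱼ - Σₖ β(δₖ, δⱼ) eₖ` keeps `B(eᵢ, fⱼ) = δᵢⱼ` and makes the span of
the `fⱼ` totally isotropic, so `(a, b) ↦ Σ aᵢ eᵢ + Σ bⱼ fⱼ` preserves `Q` and sends `Aⁿ × 0` onto
`Z`. A `Q`-preserving endomorphism of `A²ⁿ` has its `B`-adjoint as a left inverse, hence is
invertible because `A²ⁿ` is finite free over a commutative ring. Transitivity follows by composing
two such isometries.
-/

/-- The hyperbolic quadratic form `Q(x,y) = Σ xᵢ yᵢ` on `A^n × A^n ≅ A^{2n}`. -/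
def hypQ {A : Type*} [CommRing A] {n : ℕ} (v : (Fin n → A) × (Fin n → A)) : A :=
  ∑ i, v.1 i * v.2 i

open QuadraticMap Module

section Completion

variable {R M : Type*} [CommRing R] [AddCommGroup M] [Module R M]

theorem exists_isotropic_polar_eq_dotProduct {ι : Type*} [Fintype ι] [LinearOrder ι]
    (Q : QuadraticMap R M R) {E W : (ι → R) →ₗ[R] M} (hE : ∀ a, Q (E a) = 0)
    (hEW : ∀ a b, polar Q (E a) (W b) = a ⬝ᵥ b) :
    ∃ F : (ι → R) →ₗ[R] M, (∀ b, Q (F b) = 0) ∧ ∀ a b, polar Q (E a) (F b) = a ⬝ᵥ b := by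
  -- `toBilin` is triangular, so it represents `Q ∘ W` even in characteristic two.
  set β := (Q.comp W).toBilin (Pi.basisFun R ι)
  let c : (ι → R) →ₗ[R] ι → R := LinearMap.pi fun k => β (Pi.single k 1)
  have hc (b : ι → R) : c b ⬝ᵥ b = Q (W b) := by
    rw [← QuadraticMap.comp_apply, ← toQuadraticMap_toBilin (Q.comp W) (Pi.basisFun R ι),
      LinearMap.BilinMap.toQuadraticMap_apply]
    nth_rw 3 [← (Pi.basisFun R ι).sum_repr b]
    simp [c, β, dotProduct, mul_comm]
  have hEE (a a' : ι → R) : polar Q (E a) (E a') = 0 := by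
    simp [polar, ← map_add, hE]
  refine ⟨W - E ∘ₗ c, fun b => ?_, fun a b => ?_⟩
  · have h := QuadraticMap.map_add Q (W b) (-E (c b))
    rw [QuadraticMap.map_neg, hE, polar_neg_right, polar_comm, hEW, hc, ← sub_eq_add_neg] at h
    simpa using h
  · simp [polar_sub_right, hEW, hEE]

theorem apply_coprod_eq_hypQ {n : ℕ} (Q : QuadraticMap R M R) {E F : (Fin n → R) →ₗ[R] M}
    (hE : ∀ a, Q (E a) = 0) (hF : ∀ b, Q (F b) = 0) (hEF : ∀ a b, polar Q (E a) (F b) = a ⬝ᵥ b)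
    (v : (Fin n → R) × (Fin n → R)) : Q (E.coprod F v) = hypQ v := by
  have h := hEF v.1 v.2
  simp only [polar, hE, hF, sub_zero] at h
  exact h

end Completion

def hypQuad (A : Type*) [CommRing A] (n : ℕ) : QuadraticForm A ((Fin n → A) × (Fin n → A)) :=
  LinearMap.BilinMap.toQuadraticMap
    ((dotProductBilin A A).compl₁₂ (LinearMap.fst A _ _) (LinearMap.snd A _ _))

section Hyperbolic

variable {A : Type*} [CommRing A] {n : ℕ}

local notation "V" => (Fin n → A) × (Fin n → A)

theorem hypQuad_apply (v : V) : hypQuad A n v = hypQ v := rfl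

theorem polar_hypQuad (v w : V) : polar (hypQuad A n) v w = v.1 ⬝ᵥ w.2 + w.1 ⬝ᵥ v.2 :=
  LinearMap.BilinMap.polar_toQuadraticMap _ _

def hypDual : Dual A V →ₗ[A] V :=
  (LinearMap.pi fun k => LinearMap.applyₗ (0, Pi.single k 1)).prod
    (LinearMap.pi fun k => LinearMap.applyₗ (Pi.single k 1, 0))

theorem polar_hypDual (ψ : Dual A V) (v : V) : polar (hypQuad A n) v (hypDual ψ) = ψ v := by
  suffices (polarBilin (hypQuad A n)).flip (hypDual ψ) = ψ from LinearMap.congr_fun this v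
  ext k <;> simp [polar_hypQuad, hypDual]

theorem hypDual_polarBilin (v : V) : hypDual (polarBilin (hypQuad A n) v) = v := by
  ext k <;> simp [polar_hypQuad, hypDual]

theorem bijective_of_hypQ_comp {g : V →ₗ[A] V} (hg : ∀ v, hypQ (g v) = hypQ v) :
    Function.Bijective g := by
  have hpolar (v w : V) : polar (hypQuad A n) (g v) (g w) = polar (hypQuad A n) v w := by
    simp only [polar, hypQuad_apply, ← map_add, hg]
  set L := hypDual ∘ₗ g.dualMap ∘ₗ polarBilin (hypQuad A n)
  have hLg : L ∘ₗ g = LinearMap.id := by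
    refine LinearMap.ext fun v => ?_
    change hypDual (g.dualMap (polarBilin (hypQuad A n) (g v))) = v
    conv_rhs => rw [← hypDual_polarBilin v]
    exact congr_arg hypDual (LinearMap.ext (hpolar v))
  have hgL : g ∘ₗ L = LinearMap.id := (LinearMap.comp_eq_id_comm _ _).mp hLg
  exact ⟨Function.LeftInverse.injective (g := L) (LinearMap.congr_fun hLg),
    Function.RightInverse.surjective (g := L) (LinearMap.congr_fun hgL)⟩

theorem exists_hypQ_isometry_map_range_inl {Z C : Submodule A V} (hZC : IsCompl Z C)
    (hZ : ∀ v ∈ Z, hypQ v = 0) (e : Basis (Fin n) A Z) :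
    ∃ g : V ≃ₗ[A] V, (∀ v, hypQ (g v) = hypQ v) ∧
      (LinearMap.range (LinearMap.inl A (Fin n → A) (Fin n → A))).map (g : V →ₗ[A] V) = Z := by
  set E := Z.subtype ∘ₗ e.equivFun.symm.toLinearMap
  have hE (a : Fin n → A) : hypQ (E a) = 0 := hZ _ (e.equivFun.symm a).2
  set P := e.equivFun.toLinearMap ∘ₗ Z.projectionOnto C hZC
  have hPE (a : Fin n → A) : P (E a) = a := by
    simp only [E, P, LinearMap.comp_apply, LinearEquiv.coe_coe, Submodule.subtype_apply,
      Submodule.projectionOnto_apply_left, LinearEquiv.apply_symm_apply]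
  set W := hypDual ∘ₗ P.dualMap ∘ₗ (dotProductEquiv A (Fin n)).toLinearMap
  have hEW (a b : Fin n → A) : polar (hypQuad A n) (E a) (W b) = a ⬝ᵥ b := by
    simp [W, polar_hypDual, hPE, dotProduct_comm]
  obtain ⟨F, hF, hEF⟩ := exists_isotropic_polar_eq_dotProduct (hypQuad A n) hE hEW
  have hg (v : V) : hypQ (E.coprod F v) = hypQ v := apply_coprod_eq_hypQ _ hE hF hEF v
  refine ⟨LinearEquiv.ofBijective _ (bijective_of_hypQ_comp hg), hg, ?_⟩
  change (LinearMap.range _).map (E.coprod F) = Z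
  rw [← LinearMap.range_comp, LinearMap.coprod_inl,
    LinearMap.range_comp_of_range_eq_top _ (LinearEquiv.range _), Submodule.range_subtype]

end Hyperbolic

theorem stmt15_general (A : Type*) [CommRing A]
    (n : ℕ)
    (Z W : Submodule A ((Fin n → A) × (Fin n → A)))
    (hZ : (∃ C, IsCompl Z C) ∧ (∀ v ∈ Z, hypQ v = 0) ∧ Nonempty (Module.Basis (Fin n) A Z))
    (hW : (∃ C, IsCompl W C) ∧ (∀ v ∈ W, hypQ v = 0) ∧ Nonempty (Module.Basis (Fin n) A W)) :
    ∃ g : ((Fin n → A) × (Fin n → A)) ≃ₗ[A] ((Fin n → A) × (Fin n → A)),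
      (∀ v, hypQ (g v) = hypQ v) ∧
        Submodule.map (g : ((Fin n → A) × (Fin n → A)) →ₗ[A] ((Fin n → A) × (Fin n → A))) Z
          = W := by
  obtain ⟨⟨C, hZC⟩, hZ, ⟨eZ⟩⟩ := hZ
  obtain ⟨⟨D, hWD⟩, hW, ⟨eW⟩⟩ := hW
  obtain ⟨gZ, hgZ, hZ_eq⟩ := exists_hypQ_isometry_map_range_inl hZC hZ eZ
  obtain ⟨gW, hgW, hW_eq⟩ := exists_hypQ_isometry_map_range_inl hWD hW eW
  refine ⟨gZ.symm.trans gW, fun v => ?_, ?_⟩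
  · rw [LinearEquiv.trans_apply, hgW, ← hgZ, LinearEquiv.apply_symm_apply]
  · rw [LinearEquiv.coe_trans, Submodule.map_comp, (Submodule.map_symm_eq_iff gZ).mpr hZ_eq,
      hW_eq]

/-- If `A` is a field, a discrete valuation ring, or a quotient thereof, then the orthogonal
group of the hyperbolic form on `A^{2n}` acts transitively on the maximal isotropic free
direct summands of rank `n`. -/
theorem stmt15 (A : Type*) [CommRing A]
    (hA : IsField A ∨
      ∃ (R : Type) (_ : CommRing R) (_ : IsDomain R) (_ : IsDiscreteValuationRing R)
        (f : R →+* A), Function.Surjective f)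
    (n : ℕ)
    (Z W : Submodule A ((Fin n → A) × (Fin n → A)))
    (hZ : (∃ C, IsCompl Z C) ∧ (∀ v ∈ Z, hypQ v = 0) ∧ Nonempty (Module.Basis (Fin n) A Z))
    (hW : (∃ C, IsCompl W C) ∧ (∀ v ∈ W, hypQ v = 0) ∧ Nonempty (Module.Basis (Fin n) A W)) :
    ∃ g : ((Fin n → A) × (Fin n → A)) ≃ₗ[A] ((Fin n → A) × (Fin n → A)),
      (∀ v, hypQ (g v) = hypQ v) ∧
        Submodule.map (g : ((Fin n → A) × (Fin n → A)) →ₗ[A] ((Fin n → A) × (Fin n → A))) Z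
          = W :=
  stmt15_general A n Z W hZ hW
end
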